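/- There is a language that is context-free but not counter: the language { w · w^R : w ∈ {a, b, c}* } of even-length palindromes over a three-letter alphabet (where w^R denotes the reversal of w) is context-free, but it is not k-counter for any k ≥ 1. -/

import Mathlib

/-- A `ℤ^k`-automaton over alphabet `A`: a finite directed graph with states
`Fin n`, a start state, accept states, and finitely many edges labelled by
pairs `(x, g)` with `x ∈ A ∪ {ε}` (modelled as `Option A`) and `g ∈ ℤ^k`. -/
structure ZkAut (A : Type) (k : ℕ) where
  n : ℕ
  start : Fin n
  accept : Fin n → Prop
  edges : List (Fin n × (Option A × (Fin k → ℤ)) × Fin n)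

/-- `M.Path p q w g` : there is a directed path from `p` to `q` whose edge
labels read the word `w` and sum to `g` in `ℤ^k`. -/
inductive ZkAut.Path {A : Type} {k : ℕ} (M : ZkAut A k) :
    Fin M.n → Fin M.n → List A → (Fin k → ℤ) → Prop
  | nil (q : Fin M.n) : ZkAut.Path M q q [] 0
  | cons {p q r : Fin M.n} {x : Option A} {g : Fin k → ℤ} {w : List A} {h : Fin k → ℤ} :
      (p, (x, g), q) ∈ M.edges → ZkAut.Path M q r w h →
      ZkAut.Path M p r (x.toList ++ w) (g + h)

/-- The automaton accepts `w` if some path from the start state to an accept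
state reads `w` with total counter value `0 ∈ ℤ^k`. -/
def ZkAut.Accepts {A : Type} {k : ℕ} (M : ZkAut A k) (w : List A) : Prop :=
  ∃ q : Fin M.n, M.accept q ∧ M.Path M.start q w 0

/-- A language is `k`-counter if it is the set of words accepted by some
`ℤ^k`-automaton. -/
def IsCounterLang {A : Type} (k : ℕ) (L : Language A) : Prop :=
  ∃ M : ZkAut A k, ∀ w : List A, w ∈ L ↔ M.Accepts w

/-!
The grammar `S → a S a | ε` generates the even palindromes.

For the lower bound, cut an accepting run of a `ℤ^k`-automaton on `w ++ w.reverse` at the state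
`q` reached after reading `w`. Deleting ε-cycles from each half leaves runs of length `O(|w|)`,
and since the deleted cycles are rooted at states that the shortened runs still visit, they can be
spliced back into any run through those states. So the run is captured by `q`, the set of states
visited by the shortened second half, and the counter value of that half, which is `O(|w|)`:
there are only polynomially many such summaries. If two words `w ≠ w'` of the same length shared
a summary, the first half for `w` followed by the second half for `w'` would be an accepting run
on `w ++ w'.reverse`, which is not a palindrome. This is impossible once `3 ^ |w|` exceeds the
number of summaries.
-/

def evenPalindromes (T : Type*) : Language T := {w | ∃ v, w = v ++ v.reverse}

lemma eq_of_append_reverse_mem_evenPalindromes {T : Type*} {u v : List T}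
    (h : u.length = v.length) (hm : u ++ v.reverse ∈ evenPalindromes T) : u = v := by
  obtain ⟨x, hx⟩ := hm
  have hlen : u.length = x.length := by
    simpa [h, ← two_mul] using congrArg List.length hx
  obtain ⟨rfl, hv⟩ := List.append_inj hx hlen
  exact (List.reverse_injective hv).symm

lemma exists_mul_pow_lt_pow (K t : ℕ) {r : ℕ} (hr : 1 < r) :
    ∃ m, K * (m + 1) ^ t < r ^ m := by
  have h := (tendsto_pow_const_div_const_pow_of_one_lt t (r := r) (by exact_mod_cast hr)).comp
    (Filter.tendsto_add_atTop_nat 1)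
  obtain ⟨m, hm⟩ :=
    (h.eventually (gt_mem_nhds (show (0 : ℝ) < 1 / (r * K + 1) by positivity))).exists
  simp only [Function.comp, Nat.cast_add, Nat.cast_one] at hm
  rw [div_lt_div_iff₀ (by positivity) (by positivity), one_mul, pow_succ] at hm
  have hreal : ((r * K * (m + 1) ^ t : ℕ) : ℝ) < ((r ^ m * r : ℕ) : ℝ) := by
    push_cast
    nlinarith [pow_nonneg (show (0 : ℝ) ≤ m + 1 by positivity) t]
  have hnat : r * K * (m + 1) ^ t < r ^ m * r := by exact_mod_cast hreal
  exact ⟨m, by nlinarith⟩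

section ContextFree

variable {T : Type*} [Fintype T] [DecidableEq T]

variable (T) in
abbrev evenPalindromeGrammar : ContextFreeGrammar T where
  NT := Unit
  initial := ()
  rules := insert ⟨(), []⟩
    (Finset.univ.image fun a => ⟨(), [.terminal a, .nonterminal (), .terminal a]⟩)

namespace evenPalindromeGrammar

lemma mem_rules {r : ContextFreeRule T Unit} :
    r ∈ (evenPalindromeGrammar T).rules ↔
      r = ⟨(), []⟩ ∨ ∃ a, r = ⟨(), [.terminal a, .nonterminal (), .terminal a]⟩ := by
  simp [evenPalindromeGrammar, eq_comm (b := r)]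

lemma derives_append_reverse (v : List T) :
    (evenPalindromeGrammar T).Derives [.nonterminal ()] ((v ++ v.reverse).map .terminal) := by
  induction v with
  | nil => exact .single ⟨_, mem_rules.2 (.inl rfl), .input_output⟩
  | cons a v ih =>
    have hstep : (evenPalindromeGrammar T).Produces [.nonterminal ()]
        [.terminal a, .nonterminal (), .terminal a] :=
      ⟨_, mem_rules.2 (.inr ⟨a, rfl⟩), .input_output⟩
    simpa using hstep.single.trans ((ih.append_left [.terminal a]).append_right [.terminal a])

lemma derives_cases {s : List (Symbol T Unit)}
    (h : (evenPalindromeGrammar T).Derives [.nonterminal ()] s) :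
    (∃ u : List T, s = u.map .terminal ++ .nonterminal () :: u.reverse.map .terminal) ∨
      ∃ u : List T, s = (u ++ u.reverse).map .terminal := by
  induction h with
  | refl => exact .inl ⟨[], rfl⟩
  | tail _ hprod ih =>
    obtain ⟨r, hr, hrw⟩ := hprod
    obtain ⟨p, q, hb, rfl⟩ := hrw.exists_parts
    rcases ih with ⟨u, rfl⟩ | ⟨u, hu⟩
    · rw [List.append_assoc, List.singleton_append,
        List.append_cons_inj_of_notMem (by simp) (by simp)] at hb
      obtain ⟨rfl, -, rfl⟩ := hb
      rcases mem_rules.1 hr with rfl | ⟨a, rfl⟩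
      · exact .inr ⟨u, by simp⟩
      · exact .inl ⟨u ++ [a], by simp⟩
    · have : Symbol.nonterminal r.input ∈
          (u ++ u.reverse).map (.terminal : T → Symbol T Unit) := by
        rw [← hu, hb]; simp
      simp at this

end evenPalindromeGrammar

lemma evenPalindromeGrammar_language :
    (evenPalindromeGrammar T).language = evenPalindromes T := by
  ext w
  rw [ContextFreeGrammar.mem_language_iff]
  constructor
  · intro h
    rcases evenPalindromeGrammar.derives_cases h with ⟨u, hu⟩ | ⟨u, hu⟩
    · have := congrArg (Symbol.nonterminal () ∈ ·) hu
      simp at this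
    · exact ⟨u, List.map_injective_iff.2 (fun _ _ h => Symbol.terminal.inj h) hu⟩
  · rintro ⟨v, rfl⟩
    exact evenPalindromeGrammar.derives_append_reverse v

theorem isContextFree_evenPalindromes : (evenPalindromes T).IsContextFree :=
  ⟨_, evenPalindromeGrammar_language⟩

end ContextFree

namespace ZkAut

variable {A : Type} {k : ℕ} (M : ZkAut A k)

abbrev Edge : Type := Fin M.n × (Option A × (Fin k → ℤ)) × Fin M.n

def IsWalk : Fin M.n → List M.Edge → Fin M.n → Prop
  | p, [], q => p = q
  | p, e :: l, q => e ∈ M.edges ∧ e.1 = p ∧ IsWalk e.2.2 l q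

def word (l : List M.Edge) : List A := l.flatMap fun e => e.2.1.1.toList

def weight (l : List M.Edge) : Fin k → ℤ := (l.map fun e => e.2.1.2).sum

def states (p : Fin M.n) (l : List M.Edge) : List (Fin M.n) := p :: l.map fun e => e.2.2

def epsCycles (S : Set (Fin M.n)) : AddSubmonoid (Fin k → ℤ) :=
  AddSubmonoid.closure {g | ∃ s ∈ S, ∃ l, M.IsWalk s l s ∧ M.word l = [] ∧ M.weight l = g}

variable {M} {p q : Fin M.n} {e : M.Edge} {l l₁ l₂ : List M.Edge}

@[simp] lemma isWalk_nil : M.IsWalk p [] q ↔ p = q := Iff.rfl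

@[simp] lemma isWalk_cons :
    M.IsWalk p (e :: l) q ↔ e ∈ M.edges ∧ e.1 = p ∧ M.IsWalk e.2.2 l q := Iff.rfl

lemma isWalk_append :
    M.IsWalk p (l₁ ++ l₂) q ↔ ∃ m, M.IsWalk p l₁ m ∧ M.IsWalk m l₂ q := by
  induction l₁ generalizing p with
  | nil => simp
  | cons e l ih => simp [ih, and_assoc]

@[simp] lemma word_nil : M.word [] = [] := rfl

@[simp] lemma word_cons : M.word (e :: l) = e.2.1.1.toList ++ M.word l := rfl

@[simp] lemma word_append : M.word (l₁ ++ l₂) = M.word l₁ ++ M.word l₂ :=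
  List.flatMap_append

@[simp] lemma weight_nil : M.weight [] = 0 := rfl

@[simp] lemma weight_cons : M.weight (e :: l) = e.2.1.2 + M.weight l := List.sum_cons

@[simp] lemma weight_append : M.weight (l₁ ++ l₂) = M.weight l₁ + M.weight l₂ := by
  simp [weight]

lemma states_cons : M.states p (e :: l) = p :: M.states e.2.2 l := rfl

lemma states_append : M.states p (l₁ ++ l₂) = M.states p l₁ ++ l₂.map fun e => e.2.2 := by
  simp [states]

lemma IsWalk.mem_states (h : M.IsWalk p l q) : q ∈ M.states p l := by
  induction l generalizing p with
  | nil => simp [show p = q from h, states]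
  | cons e l ih => exact List.mem_cons_of_mem _ (ih h.2.2)

lemma IsWalk.states_subset_append {m : Fin M.n} (h : M.IsWalk p l₁ m) :
    M.states m l₂ ⊆ M.states p (l₁ ++ l₂) := by
  rw [states_append, states]
  exact List.cons_subset.2 ⟨List.mem_append_left _ h.mem_states, List.subset_append_right _ _⟩

lemma path_iff {w : List A} {g : Fin k → ℤ} :
    M.Path p q w g ↔ ∃ l, M.IsWalk p l q ∧ M.word l = w ∧ M.weight l = g := by
  constructor
  · intro h
    induction h with
    | nil q => exact ⟨[], rfl, rfl, rfl⟩
    | @cons p q' _ x g _ _ he _ ih =>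
      obtain ⟨l, hl, rfl, rfl⟩ := ih
      exact ⟨(p, (x, g), q') :: l, ⟨he, rfl, hl⟩, rfl, by simp⟩
  · rintro ⟨l, hl, rfl, rfl⟩
    induction l generalizing p with
    | nil => obtain rfl : p = q := hl; exact .nil p
    | cons e l ih =>
      obtain ⟨he, rfl, hl⟩ := hl
      simpa using Path.cons he (ih hl)

lemma IsWalk.exists_split_last {s : Fin M.n} (h : M.IsWalk p l q) (hs : s ∈ M.states p l) :
    ∃ l₁ l₂, l = l₁ ++ l₂ ∧ M.IsWalk p l₁ s ∧ M.IsWalk s l₂ q ∧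
      s ∉ l₂.map fun e => e.2.2 := by
  induction l generalizing p with
  | nil =>
    obtain rfl : s = p := List.mem_singleton.1 hs
    exact ⟨[], [], rfl, rfl, h, List.not_mem_nil⟩
  | cons e l ih =>
    by_cases hs' : s ∈ M.states e.2.2 l
    · obtain ⟨l₁, l₂, rfl, h₁, h₂, hlast⟩ := ih h.2.2 hs'
      exact ⟨e :: l₁, l₂, rfl, ⟨h.1, h.2.1, h₁⟩, h₂, hlast⟩
    · obtain rfl : s = p := by simpa [states_cons, hs'] using hs
      exact ⟨[], e :: l, rfl, rfl, h, hs'⟩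

lemma exists_split_of_word_eq_cons {a : A} {w : List A} (h : M.word l = a :: w) :
    ∃ l₁ e l₂, l = l₁ ++ e :: l₂ ∧ M.word l₁ = [] ∧ e.2.1.1 = some a ∧
      M.word l₂ = w := by
  induction l with
  | nil => simp at h
  | cons e l ih =>
    rcases hx : e.2.1.1 with _ | b
    · obtain ⟨l₁, e', l₂, rfl, h₁, h₂, h₃⟩ := ih (by simpa [hx] using h)
      exact ⟨e :: l₁, e', l₂, rfl, by simp [hx, h₁], h₂, h₃⟩
    · obtain ⟨rfl, rfl⟩ : b = a ∧ M.word l = w := by simpa [hx] using h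
      exact ⟨[], e, l, rfl, rfl, hx, rfl⟩

lemma exists_split_of_word_eq_append {u v : List A} (h : M.word l = u ++ v) :
    ∃ l₁ l₂, l = l₁ ++ l₂ ∧ M.word l₁ = u ∧ M.word l₂ = v := by
  induction u generalizing l with
  | nil => exact ⟨[], l, rfl, rfl, h⟩
  | cons a u ih =>
    obtain ⟨l₁, e, l₂, rfl, h₁, he, h₂⟩ := exists_split_of_word_eq_cons h
    obtain ⟨l₂', l₂'', rfl, h₂', h₂''⟩ := ih h₂
    exact ⟨l₁ ++ e :: l₂', l₂'', by simp, by simp [h₁, he, h₂'], h₂''⟩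

lemma epsCycles_mono : Monotone M.epsCycles := fun _ _ h =>
  AddSubmonoid.closure_mono fun _ ⟨s, hs, hc⟩ => ⟨s, h hs, hc⟩

lemma IsWalk.weight_mem_epsCycles {S : Set (Fin M.n)} (h : M.IsWalk p l p)
    (hw : M.word l = []) (hp : p ∈ S) : M.weight l ∈ M.epsCycles S :=
  AddSubmonoid.subset_closure ⟨p, hp, l, h, hw, rfl⟩

lemma IsWalk.exists_weight_add {v : Fin k → ℤ} (hl : M.IsWalk p l q)
    (hv : v ∈ M.epsCycles {s | s ∈ M.states p l}) :
    ∃ l', M.IsWalk p l' q ∧ M.word l' = M.word l ∧ M.weight l' = M.weight l + v := by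
  suffices ∀ l₀, M.IsWalk p l₀ q → M.states p l ⊆ M.states p l₀ →
      ∃ l', M.IsWalk p l' q ∧ M.word l' = M.word l₀ ∧ M.weight l' = M.weight l₀ + v ∧
        M.states p l₀ ⊆ M.states p l' by
    obtain ⟨l', h₁, h₂, h₃, -⟩ := this l hl (List.Subset.refl _)
    exact ⟨l', h₁, h₂, h₃⟩
  induction hv using AddSubmonoid.closure_induction with
  | mem c hc =>
    intro l₀ hl₀ hsub
    obtain ⟨s, hs, lc, hlc, hwc, rfl⟩ := hc
    obtain ⟨l₁, l₂, rfl, h₁, h₂, -⟩ := hl₀.exists_split_last (hsub hs)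
    refine ⟨l₁ ++ lc ++ l₂, isWalk_append.2 ⟨s, isWalk_append.2 ⟨s, h₁, hlc⟩, h₂⟩,
      by simp [hwc], by simp only [weight_append]; abel, ?_⟩
    simp only [states_append, List.map_append, List.append_assoc]
    exact ((List.sublist_append_right _ _).append_left _).subset
  | zero => exact fun l₀ hl₀ _ => ⟨l₀, hl₀, rfl, by simp, List.Subset.refl _⟩
  | add x y _ _ ihx ihy =>
    intro l₀ hl₀ hsub
    obtain ⟨l', hl', hw', hx, hsub'⟩ := ihx l₀ hl₀ hsub
    obtain ⟨l'', hl'', hw'', hy, hsub''⟩ := ihy l' hl' (List.Subset.trans hsub hsub')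
    exact ⟨l'', hl'', hw''.trans hw', by rw [hy, hx, add_assoc],
      List.Subset.trans hsub' hsub''⟩

theorem IsWalk.exists_nodup_of_word_eq_nil (hl : M.IsWalk p l q) (hw : M.word l = []) :
    ∃ l₀, M.IsWalk p l₀ q ∧ M.word l₀ = [] ∧ (M.states p l₀).Nodup ∧
      M.states p l₀ ⊆ M.states p l ∧
      ∃ v ∈ M.epsCycles {s | s ∈ M.states p l₀}, M.weight l = M.weight l₀ + v := by
  induction hn : l.length using Nat.strong_induction_on generalizing p l with | _ n ih =>
  -- Cutting at the last visit of `p` removes an ε-cycle rooted at `p`, which stays visited.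
  obtain ⟨l₁, l₂, rfl, h₁, h₂, hlast⟩ := hl.exists_split_last (List.mem_cons_self ..)
  rw [word_append, List.append_eq_nil_iff] at hw
  have hcycle {S : Set (Fin M.n)} (hp : p ∈ S) : M.weight l₁ ∈ M.epsCycles S :=
    h₁.weight_mem_epsCycles hw.1 hp
  cases l₂ with
  | nil =>
    obtain rfl : p = q := h₂
    exact ⟨[], rfl, rfl, List.nodup_singleton p, by simp [states], _,
      hcycle (by simp [states]), by simp⟩
  | cons e l₃ =>
    obtain ⟨he, rfl, h₃⟩ := h₂
    obtain ⟨hx, hw₃⟩ : e.2.1.1 = none ∧ M.word l₃ = [] := by simpa using hw.2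
    obtain ⟨l₀, h₀, hw₀, hnd, hsub, v, hv, hweight⟩ :=
      ih _ (by simp only [← hn, List.length_append, List.length_cons]; omega) h₃ hw₃ rfl
    refine ⟨e :: l₀, ⟨he, rfl, h₀⟩, by simp [hx, hw₀],
      List.nodup_cons.2 ⟨fun h => hlast (hsub h), hnd⟩, ?_, _,
      add_mem (hcycle (by simp [states]))
        (epsCycles_mono (fun s hs => List.mem_cons_of_mem _ hs) hv), ?_⟩
    · rw [states_cons, states_append]
      exact List.Subset.trans (List.cons_subset_cons _ hsub)
        (List.cons_subset.2 ⟨by simp [states], List.subset_append_right _ _⟩)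
    · simp only [weight_append, weight_cons, hweight]
      abel

theorem IsWalk.exists_short (hl : M.IsWalk p l q) :
    ∃ l₀, M.IsWalk p l₀ q ∧ M.word l₀ = M.word l ∧
      l₀.length < ((M.word l).length + 1) * M.n ∧
      ∃ v ∈ M.epsCycles {s | s ∈ M.states p l₀}, M.weight l = M.weight l₀ + v := by
  generalize hw : M.word l = w
  induction w generalizing p l with
  | nil =>
    obtain ⟨l₀, h₀, hw₀, hnd, -, hv⟩ := hl.exists_nodup_of_word_eq_nil hw
    refine ⟨l₀, h₀, hw₀, ?_, hv⟩
    simpa [states] using hnd.length_le_card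
  | cons a w ih =>
    obtain ⟨l₁, e, l₂, rfl, hw₁, he, hw₂⟩ := exists_split_of_word_eq_cons hw
    obtain ⟨m, h₁, he', rfl, h₂⟩ := isWalk_append.1 hl
    obtain ⟨l₁₀, h₁₀, hw₁₀, hnd, -, v₁, hv₁, hweight₁⟩ :=
      h₁.exists_nodup_of_word_eq_nil hw₁
    obtain ⟨l₂₀, h₂₀, hw₂₀, hlen₂, v₂, hv₂, hweight₂⟩ := ih h₂ hw₂
    have hlen₁ : l₁₀.length < M.n := by simpa [states] using hnd.length_le_card
    refine ⟨l₁₀ ++ e :: l₂₀, isWalk_append.2 ⟨_, h₁₀, he', rfl, h₂₀⟩,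
      by simp [hw₁₀, he, hw₂₀], ?_, v₁ + v₂,
      add_mem (M.epsCycles_mono (fun s hs => ?_) hv₁) (M.epsCycles_mono (fun s hs => ?_) hv₂),
      by simp only [weight_append, weight_cons, hweight₁, hweight₂]; abel⟩
    · simp only [List.length_append, List.length_cons, add_mul, one_mul] at hlen₂ ⊢
      omega
    · exact (states_append ▸ List.mem_append_left _ hs :)
    · exact h₁₀.states_subset_append (List.mem_cons_of_mem _ hs)

variable (M) in
def weightBound : ℕ := (M.edges.map fun e => ∑ i, (e.2.1.2 i).natAbs).sum

lemma natAbs_weight_le (hl : M.IsWalk p l q) (i : Fin k) :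
    (M.weight l i).natAbs ≤ l.length * M.weightBound := by
  induction l generalizing p with
  | nil => simp
  | cons e l ih =>
    have he : (e.2.1.2 i).natAbs ≤ M.weightBound :=
      (Finset.single_le_sum (f := fun j => (e.2.1.2 j).natAbs) (fun j _ => Nat.zero_le _)
        (Finset.mem_univ i)).trans (List.le_sum_of_mem (List.mem_map_of_mem hl.1))
    calc (M.weight (e :: l) i).natAbs ≤ (e.2.1.2 i).natAbs + (M.weight l i).natAbs := by
          simpa using Int.natAbs_add_le _ _
      _ ≤ M.weightBound + l.length * M.weightBound := add_le_add he (ih hl.2.2)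
      _ = (e :: l).length * M.weightBound := by rw [List.length_cons]; ring

lemma accepts_of_isWalk {f : Fin M.n} {v : Fin k → ℤ} (hl : M.IsWalk M.start l f)
    (hf : M.accept f) (hv : v ∈ M.epsCycles {s | s ∈ M.states M.start l})
    (h0 : M.weight l + v = 0) : M.Accepts (M.word l) :=
  let ⟨l', hl', hw, hg⟩ := hl.exists_weight_add hv
  ⟨f, hf, path_iff.2 ⟨l', hl', hw, hg.trans h0⟩⟩

variable (M) in
abbrev Summary : Type := Fin M.n × Finset (Fin M.n) × (Fin k → ℤ)

def Summarizes (w u : List A) : M.Summary → Prop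
  | (q, S, g) => ∃ lα lβ f, M.IsWalk M.start lα q ∧ M.word lα = w ∧ M.IsWalk q lβ f ∧
      M.accept f ∧ M.word lβ = u ∧ (M.states q lβ).toFinset = S ∧ M.weight lβ = g ∧
      ∃ v ∈ M.epsCycles ({s | s ∈ M.states M.start lα} ∪ S), M.weight lα + g + v = 0

lemma Summarizes.accepts_append {w u w' u' : List A} {c : M.Summary}
    (h : M.Summarizes w u c) (h' : M.Summarizes w' u' c) : M.Accepts (w ++ u') := by
  obtain ⟨q, S, g⟩ := c
  obtain ⟨lα, -, -, hα, rfl, -, -, -, -, -, v, hv, h0⟩ := h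
  obtain ⟨-, lβ, f, -, -, hβ, hf, rfl, rfl, rfl, -⟩ := h'
  have hsub : {s | s ∈ M.states M.start lα} ∪ ↑(M.states q lβ).toFinset ⊆
      {s | s ∈ M.states M.start (lα ++ lβ)} := by
    rintro s (hs | hs)
    · exact (states_append ▸ List.mem_append_left _ hs :)
    · exact hα.states_subset_append (List.mem_toFinset.1 hs)
  simpa using accepts_of_isWalk (isWalk_append.2 ⟨q, hα, hβ⟩) hf (M.epsCycles_mono hsub hv)
    (by rwa [weight_append])

variable (M) in
noncomputable def summaries (B : ℕ) : Finset M.Summary :=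
  Finset.univ ×ˢ Finset.univ ×ˢ Fintype.piFinset fun _ => Finset.Icc (-(B : ℤ)) B

lemma card_summaries (B : ℕ) : (M.summaries B).card = M.n * 2 ^ M.n * (2 * B + 1) ^ k := by
  simp only [summaries, Finset.card_product, Finset.card_univ, Fintype.card_fin,
    Fintype.card_finset, Fintype.card_piFinset, Int.card_Icc, Finset.prod_const]
  rw [← mul_assoc]
  congr
  omega

lemma exists_summarizes {w u : List A} {m : ℕ} (h : M.Accepts (w ++ u)) (hu : u.length ≤ m) :
    ∃ c ∈ M.summaries ((m + 1) * M.n * M.weightBound), M.Summarizes w u c := by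
  obtain ⟨f, hf, hpath⟩ := h
  obtain ⟨l, hl, hw, h0⟩ := path_iff.1 hpath
  obtain ⟨l₁, l₂, rfl, hw₁, hw₂⟩ := exists_split_of_word_eq_append hw
  obtain ⟨q, h₁, h₂⟩ := isWalk_append.1 hl
  obtain ⟨lα, hα, hwα, -, vα, hvα, hweightα⟩ := h₁.exists_short
  obtain ⟨lβ, hβ, hwβ, hlenβ, vβ, hvβ, hweightβ⟩ := h₂.exists_short
  refine ⟨(q, (M.states q lβ).toFinset, M.weight lβ), ?_, lα, lβ, f, hα, hwα.trans hw₁,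
    hβ, hf, hwβ.trans hw₂, rfl, rfl, vα + vβ,
    add_mem (M.epsCycles_mono (fun s hs => .inl hs) hvα)
      (M.epsCycles_mono (fun s hs => .inr (List.mem_toFinset.2 hs)) hvβ), ?_⟩
  · have hlen : lβ.length * M.weightBound ≤ (m + 1) * M.n * M.weightBound := by
      rw [hw₂] at hlenβ
      exact Nat.mul_le_mul_right _ (hlenβ.le.trans (Nat.mul_le_mul_right _ (by omega)))
    simp only [summaries, Finset.mem_product, Finset.mem_univ, Fintype.mem_piFinset,
      Finset.mem_Icc, true_and]
    intro i
    have := (natAbs_weight_le hβ i).trans hlen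
    omega
  · rw [weight_append, hweightα, hweightβ] at h0
    rw [← h0]
    abel

theorem card_fooling_set_le {ι : Type*} (s : Finset ι) (w u : ι → List A) (m : ℕ)
    (hu : ∀ i ∈ s, (u i).length ≤ m) (hacc : ∀ i ∈ s, M.Accepts (w i ++ u i))
    (hfool : ∀ i ∈ s, ∀ j ∈ s, M.Accepts (w i ++ u j) → i = j) :
    s.card ≤ M.n * 2 ^ M.n * (2 * ((m + 1) * M.n * M.weightBound) + 1) ^ k := by
  have hex : ∀ i ∈ s, ∃ c ∈ M.summaries ((m + 1) * M.n * M.weightBound),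
      M.Summarizes (w i) (u i) c := fun i hi => M.exists_summarizes (hacc i hi) (hu i hi)
  have : Nonempty M.Summary := ⟨(M.start, ∅, 0)⟩
  choose! c hc hsum using hex
  rw [← card_summaries]
  exact Finset.card_le_card_of_injOn c hc fun i hi j hj hij =>
    hfool i hi j hj ((hsum i hi).accepts_append (hij ▸ hsum j hj))

end ZkAut

theorem not_isCounterLang_evenPalindromes {T : Type} [Fintype T] (hT : 1 < Fintype.card T)
    (k : ℕ) : ¬ IsCounterLang k (evenPalindromes T) := by
  rintro ⟨M, hM⟩
  obtain ⟨m, hm⟩ :=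
    exists_mul_pow_lt_pow (M.n * 2 ^ M.n * (2 * (M.n * M.weightBound) + 1) ^ k) k hT
  have hcard := M.card_fooling_set_le Finset.univ (fun i : Fin m → T => List.ofFn i)
    (fun i => (List.ofFn i).reverse) m (by simp) (fun i _ => (hM _).1 ⟨_, rfl⟩)
    fun i _ j _ h => List.ofFn_injective <|
      eq_of_append_reverse_mem_evenPalindromes (by simp) ((hM _).2 h)
  rw [Finset.card_univ, Fintype.card_fun, Fintype.card_fin] at hcard
  refine (hm.trans_le hcard).not_ge ?_
  calc M.n * 2 ^ M.n * (2 * ((m + 1) * M.n * M.weightBound) + 1) ^ k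
      ≤ M.n * 2 ^ M.n * ((m + 1) * (2 * (M.n * M.weightBound) + 1)) ^ k := by
        gcongr; nlinarith
    _ = M.n * 2 ^ M.n * (2 * (M.n * M.weightBound) + 1) ^ k * (m + 1) ^ k := by
        rw [mul_pow]; ring

/-- The language of even-length palindromes `{ w ++ w^R }` over the
three-letter alphabet `Fin 3` is context-free but not `k`-counter for any
`k ≥ 1`. -/
theorem palindromes_context_free_not_counter :
    let L : Language (Fin 3) := {w | ∃ v : List (Fin 3), w = v ++ v.reverse}
    L.IsContextFree ∧ ∀ k : ℕ, 1 ≤ k → ¬ IsCounterLang k L :=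
  ⟨isContextFree_evenPalindromes, fun k _ => not_isCounterLang_evenPalindromes (by simp) k⟩
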